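/- arXiv:1103.0336 — 3 statements merged into one kernel-verified Lean document; each statement's English description precedes it below -/
import Mathlib

section
/- Let G be a connected compact abelian group (written multiplicatively) with dual group Γ. If a character c ∈ Γ satisfies ⟨c, g⟩ = e^{f(g)} for all g ∈ G, where f : G → ℂ is continuous, then c = 0 (the trivial character). -/
/-!
Since `exp ∘ f` is multiplicative, the cocycle `f (g * h) - f g - f h` takes values in the
discrete set `2πiℤ`; being continuous on the connected space `G × G` it is constant, so
`f - f 1` is a continuous additive map on a compact group, hence bounded, hence zero.
Thus `c` is constant, and a homomorphism that is constant is trivial.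
-/

open Complex

theorem PreconnectedSpace.eq_of_continuous_of_exp_eq_one {X : Type*} [TopologicalSpace X]
    [PreconnectedSpace X] {u : X → ℂ} (hu : Continuous u) (h : ∀ x, exp (u x) = 1) (x y : X) :
    u x = u y := by
  refine isPreconnected_univ.constant_of_mapsTo
    (T := AddSubgroup.zmultiples (2 * Real.pi * I))
    (isDiscrete_iff_discreteTopology.mpr (NormedSpace.discreteTopology_zmultiples _))
    hu.continuousOn (fun z _ => ?_) trivial trivial
  obtain ⟨n, hn⟩ := exp_eq_one_iff.mp (h z)
  exact ⟨n, by rw [hn, ← zsmul_eq_mul]⟩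

theorem map_pow_eq_nsmul_of_map_mul_eq_add {G E : Type*} [Monoid G] [AddGroup E]
    {φ : G → E} (hmul : ∀ g h, φ (g * h) = φ g + φ h) (g : G) (n : ℕ) :
    φ (g ^ n) = n • φ g :=
  (AddMonoidHom.mk' (φ ∘ Additive.toMul) fun a b => hmul a.toMul b.toMul).map_nsmul n
    (Additive.ofMul g)

theorem eq_zero_of_continuous_of_map_mul_eq_add {G E : Type*} [Monoid G] [TopologicalSpace G]
    [CompactSpace G] [NormedAddCommGroup E] [NormedSpace ℝ E] {φ : G → E} (hφ : Continuous φ)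
    (hmul : ∀ g h, φ (g * h) = φ g + φ h) (g : G) : φ g = 0 := by
  obtain ⟨C, hC⟩ := isBounded_iff_forall_norm_le.mp (isCompact_range hφ).isBounded
  have hbound : ∀ n : ℕ, n * ‖φ g‖ ≤ C := fun n => by
    simpa [map_pow_eq_nsmul_of_map_mul_eq_add hmul, ← Nat.cast_smul_eq_nsmul ℝ, norm_smul]
      using hC _ ⟨g ^ n, rfl⟩
  by_contra hne
  obtain ⟨n, hn⟩ := exists_nat_gt (C / ‖φ g‖)
  linarith [hbound n, (div_lt_iff₀ (norm_pos_iff.mpr hne)).mp hn]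

theorem nontrivial_character_not_exponential_general
    {G : Type*} [TopologicalSpace G] [CompactSpace G] [ConnectedSpace G]
    [CommGroup G] [IsTopologicalGroup G]
    (c : G → ℂ)
    (hc_hom : ∀ g h : G, c (g * h) = c g * c h)
    (f : G → ℂ) (hf : Continuous f)
    (hexp : ∀ g : G, c g = Complex.exp (f g)) :
    ∀ g : G, c g = 1 := by
  have hcocycle : ∀ p : G × G, f (p.1 * p.2) - f p.1 - f p.2 = -f 1 := fun p => by
    have hcont : Continuous fun p : G × G => f (p.1 * p.2) - f p.1 - f p.2 := by fun_prop
    refine (PreconnectedSpace.eq_of_continuous_of_exp_eq_one hcont (fun q => ?_) p (1, 1)).trans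
      (by simp)
    rw [exp_sub, exp_sub, ← hexp, ← hexp, ← hexp, hc_hom, hexp, hexp]
    field_simp [exp_ne_zero]
  have hconst : ∀ g, f g = f 1 := fun g => sub_eq_zero.mp <|
    eq_zero_of_continuous_of_map_mul_eq_add (φ := fun g => f g - f 1) (by fun_prop)
      (fun g h => by linear_combination hcocycle (g, h)) g
  have hc_one : c 1 = 1 := by
    have h := hc_hom 1 1
    rw [mul_one] at h
    exact (mul_eq_left₀ (hexp 1 ▸ exp_ne_zero _)).mp h.symm
  intro g
  rw [hexp, hconst, ← hexp, hc_one]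

/-- On a connected compact abelian group `G`, a character `c` (a continuous
homomorphism into the unit circle of `ℂ`) which is an exponential, i.e. `c g = exp (f g)`
for a continuous `f : G → ℂ`, must be the trivial character. -/
theorem nontrivial_character_not_exponential
    {G : Type*} [TopologicalSpace G] [CompactSpace G] [ConnectedSpace G]
    [CommGroup G] [IsTopologicalGroup G]
    (c : G → ℂ) (hc_cont : Continuous c)
    (hc_hom : ∀ g h : G, c (g * h) = c g * c h)
    (hc_mod : ∀ g : G, ‖c g‖ = 1)
    (f : G → ℂ) (hf : Continuous f)
    (hexp : ∀ g : G, c g = Complex.exp (f g)) :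
    ∀ g : G, c g = 1 :=
  nontrivial_character_not_exponential_general c hc_hom f hf hexp
end

section
/- Let G be a connected compact abelian group and f : G → ℂ a continuous function such that f(gh) - f(g) - f(h) ∈ 2πi ℤ for all g, h ∈ G. Then f is constant, and its constant value lies in 2πi ℤ + f(1) with f(g) = f(1) for all g; in particular e^{f} is the constant function e^{f(1)}. -/
open Complex

/-!
The defect `(g, h) ↦ f (g * h) - f g - f h` is continuous on the connected space `G × G` and
takes values in the discrete group `2πiℤ`, so it is constant, equal to its value `-f 1` at
`(1, 1)`. Hence `g ↦ f g - f 1` is a homomorphism into `(ℂ, +)`; its image is bounded because `G`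
is compact, while `f (g ^ n) - f 1 = n (f g - f 1)`, so it vanishes.
-/

theorem eq_of_continuous_of_mem_zmultiples {X E : Type*} [TopologicalSpace X]
    [PreconnectedSpace X] [NormedAddCommGroup E] [NormedSpace ℚ E] {φ : X → E} {e : E}
    (hφ : Continuous φ) (hmem : ∀ x, φ x ∈ AddSubgroup.zmultiples e) (x y : X) : φ x = φ y :=
  isPreconnected_univ.constant_of_mapsTo
    (isDiscrete_iff_discreteTopology.mpr (NormedSpace.discreteTopology_zmultiples e))
    hφ.continuousOn (fun x _ ↦ hmem x) trivial trivial

theorem map_mul_eq_of_defect_mem_zmultiples {M E : Type*} [TopologicalSpace M] [MulOneClass M]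
    [ContinuousMul M] [PreconnectedSpace M] [NormedAddCommGroup E] [NormedSpace ℚ E]
    {f : M → E} {e : E} (hf : Continuous f)
    (hdefect : ∀ g h, f (g * h) - f g - f h ∈ AddSubgroup.zmultiples e) (g h : M) :
    f (g * h) = f g + f h - f 1 := by
  have hconst := eq_of_continuous_of_mem_zmultiples (X := M × M)
    (φ := fun p ↦ f (p.1 * p.2) - f p.1 - f p.2) (by fun_prop) (fun p ↦ hdefect p.1 p.2)
    (g, h) (1, 1)
  simp only [mul_one] at hconst
  rw [← sub_eq_zero, ← sub_eq_zero.mpr hconst]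
  abel

theorem eq_zero_of_isBounded_range_of_map_mul {M E : Type*} [Monoid M] [NormedAddCommGroup E]
    [NormedSpace ℝ E] {F : M → E} (hmul : ∀ g h, F (g * h) = F g + F h)
    (hbdd : Bornology.IsBounded (Set.range F)) (g : M) : F g = 0 := by
  have hone : F 1 = 0 := by simpa using hmul 1 1
  have hpow (n : ℕ) : F (g ^ n) = n • F g := by
    induction n with
    | zero => simpa using hone
    | succ n ih => rw [pow_succ, hmul, ih, succ_nsmul]
  obtain ⟨C, hC⟩ := isBounded_iff_forall_norm_le.mp hbdd
  by_contra hne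
  obtain ⟨n, hn⟩ := exists_nat_gt (C / ‖F g‖)
  have hle : (n : ℝ) * ‖F g‖ ≤ C := by
    simpa [hpow, RCLike.norm_nsmul ℝ] using hC _ ⟨g ^ n, rfl⟩
  rw [div_lt_iff₀ (norm_pos_iff.mpr hne)] at hn
  linarith

/-- If `f : G → ℂ` is continuous on a connected compact abelian group `G` and
`f (g*h) - f g - f h ∈ 2πiℤ` for all `g, h`, then `f` is constant (equal to `f 1`);
in particular `exp ∘ f` is the constant `exp (f 1)`. -/
theorem continuous_additive_up_to_2pii_is_constant
    {G : Type*} [TopologicalSpace G] [CompactSpace G] [ConnectedSpace G]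
    [CommGroup G] [IsTopologicalGroup G]
    (f : G → ℂ) (hf : Continuous f)
    (hadd : ∀ g h : G, ∃ k : ℤ, f (g * h) - f g - f h = 2 * Real.pi * I * (k : ℂ)) :
    (∀ g : G, f g = f 1) ∧ (∀ g : G, Complex.exp (f g) = Complex.exp (f 1)) := by
  have hdefect (g h : G) : f (g * h) - f g - f h ∈ AddSubgroup.zmultiples (2 * Real.pi * I) := by
    obtain ⟨k, hk⟩ := hadd g h
    exact ⟨k, by simp only [hk, zsmul_eq_mul, mul_comm]⟩
  have hmul (g h : G) : f (g * h) - f 1 = (f g - f 1) + (f h - f 1) := by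
    rw [map_mul_eq_of_defect_mem_zmultiples hf hdefect g h]
    ring
  have hconst (g : G) : f g = f 1 := sub_eq_zero.mp <|
    eq_zero_of_isBounded_range_of_map_mul hmul
      (isCompact_range (hf.sub continuous_const)).isBounded g
  exact ⟨hconst, fun g ↦ by rw [hconst g]⟩
end

section
/- Let a be an n×n matrix function on the circle whose entries are trigonometric polynomials, a(t) = Σ_{j=j₀}^{j₁} a_j e^{ijt} with matrix coefficients a_j ∈ ℂ^{n×n}. Then there exists an integer j₂ ≥ j₁ such that for every ε > 0 one can choose coefficients a'_k ∈ ℂ^{n×n}, k = j₀,…,j₂, with ‖a'_k − a_k‖ < ε for all k (setting a_{j₁+1} = ⋯ = a_{j₂} = 0) and such that the matrix function a'(t) = Σ_{j=j₀}^{j₂} a'_j e^{ijt} satisfies det a'(t) ≠ 0 for all t ∈ [0, 2π). -/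
open Complex Polynomial Filter Topology Finset

/-!
With `P(z) = Σ_{j=j₀}^{j₁} a_j z^{j-j₀}` we have `a(t) = e^{ij₀t} P(e^{it})`. Adding to `a_{j₀}` a
small scalar `c` that is not an eigenvalue of `-a_{j₀}` makes `det P(0) ≠ 0`, so `det P` becomes a
nonzero polynomial with finitely many roots. Replacing `a_j` by `r^{j-j₀} a_j` with `r` close to `1`
evaluates `P` on the circle of radius `r` instead, which misses all roots once `r` is not one of
their moduli. No higher-order terms are needed: `j₂ = j₁`.
-/

namespace Matrix

variable {m : Type*}

theorem finite_setOf_det_add_smul_one_eq_zero [Fintype m] [DecidableEq m] {K : Type*} [Field K]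
    (A : Matrix m m K) :
    {c : K | (A + c • (1 : Matrix m m K)).det = 0}.Finite := by
  refine (finite_setOfPred_isRoot (-A).charpoly_monic.ne_zero).subset fun c hc => ?_
  simp only [Set.mem_ofPred_eq, IsRoot.def, eval_charpoly, scalar_apply, ← smul_one_eq_diagonal,
    sub_neg_eq_add, add_comm] at hc ⊢
  exact hc

noncomputable def shiftedPolyMatrix {R : Type*} [CommRing R] (b : ℤ → Matrix m m R) (j₀ j₂ : ℤ) :
    Matrix m m R[X] :=
  of fun p q => ∑ j ∈ Icc j₀ j₂, monomial (j - j₀).toNat (b j p q)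

variable {R : Type*} [CommRing R] (b : ℤ → Matrix m m R) {j₀ j₂ : ℤ}

theorem shiftedPolyMatrix_map_eval (j₀ j₂ : ℤ) (w : R) :
    (shiftedPolyMatrix b j₀ j₂).map (eval w) = ∑ j ∈ Icc j₀ j₂, w ^ (j - j₀).toNat • b j := by
  ext p q
  simp [shiftedPolyMatrix, Matrix.sum_apply, eval_finsetSum, mul_comm]

variable [Fintype m] [DecidableEq m]

theorem eval_det_shiftedPolyMatrix (j₀ j₂ : ℤ) (w : R) :
    (shiftedPolyMatrix b j₀ j₂).det.eval w = (∑ j ∈ Icc j₀ j₂, w ^ (j - j₀).toNat • b j).det := by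
  rw [← shiftedPolyMatrix_map_eval, ← coe_evalRingHom, RingHom.map_det]
  rfl

theorem det_shiftedPolyMatrix_ne_zero (h : j₀ ≤ j₂) (hb : (b j₀).det ≠ 0) :
    (shiftedPolyMatrix b j₀ j₂).det ≠ 0 := by
  intro h0
  have hsum : ∑ j ∈ Icc j₀ j₂, (0 : R) ^ (j - j₀).toNat • b j = b j₀ := by
    refine (sum_eq_single_of_mem j₀ (mem_Icc.2 ⟨le_rfl, h⟩) fun j hj hne => ?_).trans (by simp)
    rw [zero_pow (by simp at hj; omega), zero_smul]
  apply hb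
  rw [← hsum, ← eval_det_shiftedPolyMatrix, h0, eval_zero]

end Matrix

theorem Matrix.exists_norm_lt_det_add_smul_one_ne_zero {m : Type*} [Fintype m] [DecidableEq m]
    (A : Matrix m m ℂ) {δ : ℝ} (hδ : 0 < δ) : ∃ c : ℂ, ‖c‖ < δ ∧ (A + c • 1).det ≠ 0 :=
  ((tendsto_norm_zero.eventually (gt_mem_nhds hδ)).filter_mono nhdsWithin_le_nhds |>.and <|
    nhdsNE_le_cofinite (0 : ℂ) (finite_setOf_det_add_smul_one_eq_zero A).compl_mem_cofinite).exists

theorem Polynomial.eventually_nhdsNE_one_eval_ofReal_mul_exp_ne_zero {g : ℂ[X]} (hg : g ≠ 0) :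
    ∀ᶠ r : ℝ in 𝓝[≠] 1, ∀ t : ℝ, g.eval (r * exp (I * t)) ≠ 0 := by
  filter_upwards [eventually_gt_nhds one_pos |>.filter_mono nhdsWithin_le_nhds,
    nhdsNE_le_cofinite (1 : ℝ) ((finite_setOfPred_isRoot hg).image norm).compl_mem_cofinite]
    with r hr_pos hr_root t hzero
  exact hr_root ⟨_, hzero, by simp [norm_exp, abs_of_pos hr_pos]⟩

theorem eventually_forall_norm_ofReal_pow_smul_sub_lt {ι m n : Type*} [Fintype m] [Fintype n]
    (s : Finset ι) (k : ι → ℕ) (A : ι → Matrix m n ℂ) {δ : ℝ} (hδ : 0 < δ) :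
    ∀ᶠ r : ℝ in 𝓝 1, ∀ i ∈ s, ∀ p q, ‖((r : ℂ) ^ k i • A i) p q - A i p q‖ < δ := by
  simp only [eventually_all_finset, eventually_all]
  intro i _ p q
  have hcont : Continuous fun r : ℝ => (r : ℂ) ^ k i * A i p q := by fun_prop
  simpa [dist_eq_norm] using
    Metric.tendsto_nhds.1 (hcont.tendsto' 1 (A i p q) (by simp)) δ hδ

theorem sum_Icc_exp_smul_ofReal_pow_smul {m : Type*} (b : ℤ → Matrix m m ℂ) (j₀ j₂ : ℤ) (r t : ℝ) :
    ∑ j ∈ Icc j₀ j₂, exp (I * j * t) • ((r : ℂ) ^ (j - j₀).toNat • b j) =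
      exp (I * j₀ * t) • ∑ j ∈ Icc j₀ j₂, (r * exp (I * t)) ^ (j - j₀).toNat • b j := by
  rw [smul_sum]
  refine sum_congr rfl fun j hj => ?_
  have hk : (((j - j₀).toNat : ℕ) : ℂ) = j - j₀ := by
    exact_mod_cast Int.toNat_of_nonneg (by simp at hj; omega)
  have hexp : exp (I * j * t) = exp (I * j₀ * t) * exp (I * t) ^ (j - j₀).toNat := by
    rw [← exp_nat_mul, ← exp_add, hk]
    ring_nf
  rw [hexp, smul_smul, smul_smul, mul_pow]
  ring_nf

/-- a matrix trigonometric polynomial `a(t) = Σ_{j=j₀}^{j₁} a_j e^{ijt}` can be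
perturbed, after possibly adding finitely many higher-order terms (up to some `j₂ ≥ j₁`
depending only on `a`), by an arbitrarily small change of coefficients so that the perturbed
polynomial has everywhere nonzero determinant on the circle. -/
theorem trig_matrix_polynomial_small_perturbation_invertible
    (n : ℕ) (j₀ j₁ : ℤ) (hj : j₀ ≤ j₁)
    (a : ℤ → Matrix (Fin n) (Fin n) ℂ)
    (hsupp : ∀ j : ℤ, j < j₀ ∨ j₁ < j → a j = 0) :
    ∃ j₂ : ℤ, j₁ ≤ j₂ ∧
      ∀ ε : ℝ, 0 < ε →
        ∃ a' : ℤ → Matrix (Fin n) (Fin n) ℂ,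
          (∀ j : ℤ, j < j₀ ∨ j₂ < j → a' j = 0) ∧
          (∀ (j : ℤ) (p q : Fin n), ‖a' j p q - a j p q‖ < ε) ∧
          (∀ t : ℝ,
            (∑ j ∈ Finset.Icc j₀ j₂, Complex.exp (I * (j : ℂ) * (t : ℂ)) • a' j).det ≠ 0) := by
  refine ⟨j₁, le_rfl, fun ε hε => ?_⟩
  obtain ⟨c, hc, hdet⟩ := (a j₀).exists_norm_lt_det_add_smul_one_ne_zero (half_pos hε)
  set b : ℤ → Matrix (Fin n) (Fin n) ℂ := fun j => a j + if j = j₀ then c • 1 else 0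
  have hba : ∀ j p q, ‖b j p q - a j p q‖ ≤ ‖c‖ := fun j p q => by
    by_cases hjj : j = j₀ <;> by_cases hpq : p = q <;> simp [b, hjj, hpq]
  have hg : (Matrix.shiftedPolyMatrix b j₀ j₁).det ≠ 0 :=
    Matrix.det_shiftedPolyMatrix_ne_zero b hj (by simpa [b] using hdet)
  obtain ⟨r, hr_close, hr_root⟩ :=
    ((eventually_forall_norm_ofReal_pow_smul_sub_lt (Icc j₀ j₁) (fun j => (j - j₀).toNat) b
      (half_pos hε)).filter_mono nhdsWithin_le_nhds |>.and
        (eventually_nhdsNE_one_eval_ofReal_mul_exp_ne_zero hg)).exists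
  refine ⟨fun j => if j ∈ Icc j₀ j₁ then (r : ℂ) ^ (j - j₀).toNat • b j else 0, ?_, ?_, ?_⟩
  · intro j hj'
    exact if_neg (by rw [mem_Icc]; omega)
  · intro j p q
    dsimp only
    split_ifs with hj'
    · linarith [norm_sub_le_norm_sub_add_norm_sub (((r : ℂ) ^ (j - j₀).toNat • b j) p q)
        (b j p q) (a j p q), hr_close j hj' p q, hba j p q]
    · rw [hsupp j (by rw [mem_Icc] at hj'; omega)]
      simpa using hε
  · intro t
    rw [sum_congr rfl fun j hj' => congrArg _ (if_pos hj'), sum_Icc_exp_smul_ofReal_pow_smul,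
      Matrix.det_smul, ← Matrix.eval_det_shiftedPolyMatrix]
    exact mul_ne_zero (pow_ne_zero _ (exp_ne_zero _)) (hr_root t)
end
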